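/- Suppose V ∈ B_s with s > n/2, and let C_0 be the doubling constant of the measure V(y)dy. Then for any N > log_2(C_0) + 1 there exists a constant C_N such that for all x ∈ R^n and r > 0, (1 + r m_V(x))^{-N} ∫_{B(x,r)} V(y) dy ≤ C_N r^{n-2}. -/

import Mathlib

open MeasureTheory Metric Set ENNReal
noncomputable section

/-- The dyadic annulus `E_k = B(x₀, 2^k r) \ B(x₀, 2^(k-1) r)`. -/
def Ann (n : ℕ) (x0 : EuclideanSpace ℝ (Fin n)) (r : ℝ) (k : ℤ) :
    Set (EuclideanSpace ℝ (Fin n)) :=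
  Metric.ball x0 ((2 : ℝ) ^ k * r) \ Metric.ball x0 ((2 : ℝ) ^ (k - 1) * r)

/-- The `L^p` norm of `f` on a set `s` (with exponent `p` a real number). -/
def lpOn (n : ℕ) (f : EuclideanSpace ℝ (Fin n) → ℝ) (p : ℝ)
    (s : Set (EuclideanSpace ℝ (Fin n))) : ℝ≥0∞ :=
  (∫⁻ x in s, (ENNReal.ofReal |f x|) ^ p) ^ (1 / p)

/-- The `L^p(ℝⁿ)` norm of `f`. -/
def lpNorm (n : ℕ) (f : EuclideanSpace ℝ (Fin n) → ℝ) (p : ℝ) : ℝ≥0∞ :=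
  lpOn n f p Set.univ

/-- The `q`-th power of the generalized Morrey norm `‖f‖_{L^{p,q,λ}_{α,θ,V}}`. -/
def morreyQ (n : ℕ) (mV : EuclideanSpace ℝ (Fin n) → ℝ) (p q lam alpha theta : ℝ)
    (f : EuclideanSpace ℝ (Fin n) → ℝ) : ℝ≥0∞ :=
  ⨆ (x0 : EuclideanSpace ℝ (Fin n)) (r : ℝ) (_ : 0 < r),
    ENNReal.ofReal ((1 + r * mV x0) ^ alpha * r ^ (-(lam * n))) *
      ∑' k : ℕ, (volume (Ann n x0 r (-(k : ℤ)))) ^ (theta * q) *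
        (lpOn n f p (Ann n x0 r (-(k : ℤ)))) ^ q

/-- The generalized Morrey norm. -/
def morreyNorm (n : ℕ) (mV : EuclideanSpace ℝ (Fin n) → ℝ) (p q lam alpha theta : ℝ)
    (f : EuclideanSpace ℝ (Fin n) → ℝ) : ℝ≥0∞ :=
  (morreyQ n mV p q lam alpha theta f) ^ (1 / q)

/-- `V` belongs to the reverse Hölder class `B_s`. -/
def ReverseHolder (n : ℕ) (V : EuclideanSpace ℝ (Fin n) → ℝ) (s : ℝ) : Prop :=
  ∃ C > (0 : ℝ), ∀ (x : EuclideanSpace ℝ (Fin n)) (r : ℝ), 0 < r →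
    ((volume (Metric.ball x r))⁻¹ *
        ∫⁻ y in Metric.ball x r, (ENNReal.ofReal (V y)) ^ s) ^ (1 / s) ≤
      ENNReal.ofReal C *
        ((volume (Metric.ball x r))⁻¹ * ∫⁻ y in Metric.ball x r, ENNReal.ofReal (V y))

/-- The auxiliary function `m_V` of Shen. -/
def auxm (n : ℕ) (V : EuclideanSpace ℝ (Fin n) → ℝ) (x : EuclideanSpace ℝ (Fin n)) : ℝ :=
  (sSup {r : ℝ | 0 < r ∧
      ∫⁻ y in Metric.ball x r, ENNReal.ofReal (V y) ≤ ENNReal.ofReal (r ^ ((n : ℝ) - 2))})⁻¹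

/-- The BMO seminorm of `b`. -/
def bmoNorm (n : ℕ) (b : EuclideanSpace ℝ (Fin n) → ℝ) : ℝ≥0∞ :=
  ⨆ (x : EuclideanSpace ℝ (Fin n)) (r : ℝ) (_ : 0 < r),
    (volume (Metric.ball x r))⁻¹ *
      ∫⁻ y in Metric.ball x r, ENNReal.ofReal |b y - ⨍ z in Metric.ball x r, b z|

/-- The fractional Hardy–Littlewood maximal function `M_{σ,γ}`. -/
def fracMax (n : ℕ) (sigma gam : ℝ) (f : EuclideanSpace ℝ (Fin n) → ℝ)
    (x : EuclideanSpace ℝ (Fin n)) : ℝ≥0∞ :=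
  ⨆ (z : EuclideanSpace ℝ (Fin n)) (ρ : ℝ) (_ : 0 < ρ) (_ : x ∈ Metric.ball z ρ),
    ((volume (Metric.ball z ρ)) ^ (-(1 - sigma * gam / n)) *
      ∫⁻ y in Metric.ball z ρ, (ENNReal.ofReal |f y|) ^ gam) ^ (1 / gam)

/-! Choose `ρ` with `∫_{B(x,ρ)} V ≤ ρ^{n-2}` and `2ρ m_V(x) > 1`, which the definition of `m_V`
as an inverse supremum allows. For `r ≤ ρ`, Hölder's inequality on `B(x,r)` and the reverse Hölder
inequality on `B(x,ρ)` give `∫_{B(x,r)} V ≤ C (r/ρ)^{n(1-1/s)} ∫_{B(x,ρ)} V ≤ C r^{n-2}`, since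
`n(1-1/s) ≥ n-2` when `s > n/2`. For `2^k ρ ≤ r < 2^{k+1} ρ`, doubling gives
`∫_{B(x,r)} V ≤ C_0^{k+1} ρ^{n-2}`, while `1 + r m_V(x) ≥ 2^{k-1}` and `C_0 < 2^N`, so the weight
`(1 + r m_V(x))^{-N}` absorbs `C_0^k`. If `C_0 < 1`, doubling forces every ball integral to vanish.
-/

theorem lintegral_le_lintegral_rpow_mul_measure_univ {α : Type*} [MeasurableSpace α]
    (μ : Measure α) {s : ℝ} (hs : 1 < s) (f : α → ℝ≥0∞) :
    ∫⁻ a, f a ∂μ ≤ (∫⁻ a, f a ^ s ∂μ) ^ (1 / s) * μ univ ^ (1 - 1 / s) := by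
  -- `f` need not be measurable: apply Hölder to a measurable minorant with the same integral.
  obtain ⟨g, hg, hgf, hfg⟩ := exists_measurable_le_lintegral_eq μ f
  have hconj := Real.HolderConjugate.conjExponent hs
  calc ∫⁻ a, f a ∂μ = ∫⁻ a, (g * 1) a ∂μ := by simp [hfg]
    _ ≤ (∫⁻ a, g a ^ s ∂μ) ^ (1 / s) * (∫⁻ _, 1 ^ s.conjExponent ∂μ) ^ (1 / s.conjExponent) :=
      ENNReal.lintegral_mul_le_Lp_mul_Lq μ hconj hg.aemeasurable aemeasurable_const
    _ ≤ (∫⁻ a, f a ^ s ∂μ) ^ (1 / s) * μ univ ^ (1 - 1 / s) := by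
      rw [one_div s.conjExponent, ← hconj.one_sub_inv, ← one_div]
      simp only [ENNReal.one_rpow, lintegral_const, one_mul]
      gcongr with a
      exact hgf a

theorem setLIntegral_ball_le_of_reverseHolder {E : Type*} [NormedAddCommGroup E]
    [NormedSpace ℝ E] [MeasurableSpace E] [BorelSpace E] [FiniteDimensional ℝ E]
    (μ : Measure E) [μ.IsAddHaarMeasure] {f : E → ℝ≥0∞} {s C r R : ℝ} {x : E}
    (hs : 1 < s) (hr : 0 < r) (hrR : r ≤ R)
    (hRH : ((μ (ball x R))⁻¹ * ∫⁻ y in ball x R, f y ^ s ∂μ) ^ (1 / s) ≤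
      ENNReal.ofReal C * ((μ (ball x R))⁻¹ * ∫⁻ y in ball x R, f y ∂μ)) :
    ∫⁻ y in ball x r, f y ∂μ ≤
      ENNReal.ofReal C * ENNReal.ofReal ((r / R) ^ Module.finrank ℝ E) ^ (1 - 1 / s) *
        ∫⁻ y in ball x R, f y ∂μ := by
  have hR : 0 < R := hr.trans_le hrR
  have hμR0 : μ (ball x R) ≠ 0 := (measure_ball_pos μ x hR).ne'
  have hμRtop : μ (ball x R) ≠ ⊤ := measure_ball_lt_top.ne
  have hμr : μ (ball x r) = ENNReal.ofReal ((r / R) ^ Module.finrank ℝ E) * μ (ball x R) := by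
    rw [μ.addHaar_ball_of_pos x hr, μ.addHaar_ball_of_pos x hR, ← mul_assoc,
      ← ENNReal.ofReal_mul (by positivity), div_pow, div_mul_cancel₀ _ (by positivity)]
  have hsplit : (∫⁻ y in ball x R, f y ^ s ∂μ) ^ (1 / s) =
      μ (ball x R) ^ (1 / s) * ((μ (ball x R))⁻¹ * ∫⁻ y in ball x R, f y ^ s ∂μ) ^ (1 / s) := by
    rw [← ENNReal.mul_rpow_of_nonneg _ _ (by positivity), ← mul_assoc,
      ENNReal.mul_inv_cancel hμR0 hμRtop, one_mul]
  have hcancel : μ (ball x R) ^ (1 / s) * μ (ball x R) ^ (1 - 1 / s) * (μ (ball x R))⁻¹ = 1 := by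
    rw [← ENNReal.rpow_add _ _ hμR0 hμRtop, add_sub_cancel, ENNReal.rpow_one,
      ENNReal.mul_inv_cancel hμR0 hμRtop]
  have hs' : 0 ≤ 1 - 1 / s := sub_nonneg.2 ((div_le_one (by linarith)).2 hs.le)
  calc ∫⁻ y in ball x r, f y ∂μ
      ≤ (∫⁻ y in ball x r, f y ^ s ∂μ) ^ (1 / s) * μ (ball x r) ^ (1 - 1 / s) := by
        simpa using lintegral_le_lintegral_rpow_mul_measure_univ (μ.restrict (ball x r)) hs f
    _ ≤ (∫⁻ y in ball x R, f y ^ s ∂μ) ^ (1 / s) * μ (ball x r) ^ (1 - 1 / s) := by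
        gcongr
    _ ≤ μ (ball x R) ^ (1 / s) * (ENNReal.ofReal C * ((μ (ball x R))⁻¹ *
          ∫⁻ y in ball x R, f y ∂μ)) * μ (ball x r) ^ (1 - 1 / s) := by
        rw [hsplit]
        gcongr
    _ = ENNReal.ofReal C * ENNReal.ofReal ((r / R) ^ Module.finrank ℝ E) ^ (1 - 1 / s) *
          (∫⁻ y in ball x R, f y ∂μ) *
          (μ (ball x R) ^ (1 / s) * μ (ball x R) ^ (1 - 1 / s) * (μ (ball x R))⁻¹) := by
        rw [hμr, ENNReal.mul_rpow_of_nonneg _ _ hs']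
        ring
    _ = _ := by rw [hcancel, mul_one]

theorem rpow_neg_mul_pow_succ_le {C0 N t : ℝ} {k : ℕ} (hC0 : 0 < C0) (hN : 0 ≤ N)
    (hC0N : C0 ≤ 2 ^ N) (hk : (2 : ℝ) ^ k ≤ 2 * (1 + t)) :
    (1 + t) ^ (-N) * C0 ^ (k + 1) ≤ C0 * 2 ^ N := by
  have ht : 0 < 1 + t := by have := pow_pos (two_pos (α := ℝ)) k; linarith
  rw [Real.rpow_neg ht.le, inv_mul_le_iff₀ (by positivity)]
  calc C0 ^ (k + 1) = C0 * C0 ^ k := pow_succ' C0 k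
    _ ≤ C0 * ((2 : ℝ) ^ N) ^ k := by gcongr
    _ = C0 * 2 ^ N * ((2 : ℝ) ^ k / 2) ^ N := by
        rw [Real.div_rpow (by positivity) zero_le_two, ← Real.rpow_natCast, ← Real.rpow_natCast,
          ← Real.rpow_mul zero_le_two, ← Real.rpow_mul zero_le_two, mul_comm N]
        field_simp
    _ ≤ C0 * 2 ^ N * (1 + t) ^ N := by gcongr; linarith
    _ = (1 + t) ^ N * (C0 * 2 ^ N) := by ring

section Doubling

variable {X : Type*} [PseudoMetricSpace X] [MeasurableSpace X] {μ : Measure X}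
  {f : X → ℝ≥0∞} {x : X} {C0 : ℝ}

theorem setLIntegral_ball_two_pow_mul_le
    (hdouble : ∀ t, 0 < t →
      ∫⁻ y in ball x (2 * t), f y ∂μ ≤ ENNReal.ofReal C0 * ∫⁻ y in ball x t, f y ∂μ)
    {ρ : ℝ} (hρ : 0 < ρ) (k : ℕ) :
    ∫⁻ y in ball x (2 ^ k * ρ), f y ∂μ ≤ ENNReal.ofReal C0 ^ k * ∫⁻ y in ball x ρ, f y ∂μ := by
  induction k with
  | zero => simp
  | succ k ih =>
    calc ∫⁻ y in ball x (2 ^ (k + 1) * ρ), f y ∂μ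
        = ∫⁻ y in ball x (2 * (2 ^ k * ρ)), f y ∂μ := by rw [pow_succ', mul_assoc]
      _ ≤ ENNReal.ofReal C0 * ∫⁻ y in ball x (2 ^ k * ρ), f y ∂μ := hdouble _ (by positivity)
      _ ≤ ENNReal.ofReal C0 ^ (k + 1) * ∫⁻ y in ball x ρ, f y ∂μ := by
        rw [pow_succ', mul_assoc]
        gcongr

theorem setLIntegral_ball_eq_zero_of_doubling_lt_one
    (hdouble : ∀ t, 0 < t →
      ∫⁻ y in ball x (2 * t), f y ∂μ ≤ ENNReal.ofReal C0 * ∫⁻ y in ball x t, f y ∂μ)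
    (hC0 : C0 < 1) {ρ : ℝ} (hρ : 0 < ρ) (hfin : ∫⁻ y in ball x ρ, f y ∂μ ≠ ⊤) (r : ℝ) :
    ∫⁻ y in ball x r, f y ∂μ = 0 := by
  have hρ0 : ∫⁻ y in ball x ρ, f y ∂μ = 0 := by
    by_contra hne
    have hlt : ENNReal.ofReal C0 * ∫⁻ y in ball x ρ, f y ∂μ < ∫⁻ y in ball x ρ, f y ∂μ :=
      by simpa using ENNReal.mul_lt_mul_left hne hfin (ENNReal.ofReal_lt_one.2 hC0)
    refine hlt.not_ge ((lintegral_mono_set (ball_subset_ball ?_)).trans (hdouble ρ hρ))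
    linarith
  obtain ⟨k, hk⟩ := pow_unbounded_of_one_lt (r / ρ) one_lt_two
  refine le_antisymm ?_ zero_le
  calc ∫⁻ y in ball x r, f y ∂μ ≤ ∫⁻ y in ball x (2 ^ k * ρ), f y ∂μ :=
        lintegral_mono_set (ball_subset_ball ((div_le_iff₀ hρ).1 hk.le))
    _ ≤ ENNReal.ofReal C0 ^ k * ∫⁻ y in ball x ρ, f y ∂μ :=
        setLIntegral_ball_two_pow_mul_le hdouble hρ k
    _ = 0 := by rw [hρ0, mul_zero]

theorem rpow_neg_mul_setLIntegral_ball_le_of_doubling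
    (hdouble : ∀ t, 0 < t →
      ∫⁻ y in ball x (2 * t), f y ∂μ ≤ ENNReal.ofReal C0 * ∫⁻ y in ball x t, f y ∂μ)
    (hC0 : 0 < C0) {N a ρ r m : ℝ} (hN : 0 ≤ N) (hC0N : C0 ≤ 2 ^ N) (ha : 0 ≤ a)
    (hρ : 0 < ρ) (hρint : ∫⁻ y in ball x ρ, f y ∂μ ≤ ENNReal.ofReal (ρ ^ a)) (hρr : ρ < r)
    (hm : 1 < 2 * ρ * m) :
    ENNReal.ofReal ((1 + r * m) ^ (-N)) * ∫⁻ y in ball x r, f y ∂μ ≤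
      ENNReal.ofReal (C0 * 2 ^ N * r ^ a) := by
  obtain ⟨k, hk, hk'⟩ := exists_nat_pow_near ((one_le_div hρ).2 hρr.le) one_lt_two
  have hball : ∫⁻ y in ball x r, f y ∂μ ≤ ENNReal.ofReal (C0 ^ (k + 1) * ρ ^ a) :=
    calc ∫⁻ y in ball x r, f y ∂μ ≤ ∫⁻ y in ball x (2 ^ (k + 1) * ρ), f y ∂μ :=
          lintegral_mono_set (ball_subset_ball ((div_lt_iff₀ hρ).1 hk').le)
      _ ≤ ENNReal.ofReal C0 ^ (k + 1) * ∫⁻ y in ball x ρ, f y ∂μ :=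
          setLIntegral_ball_two_pow_mul_le hdouble hρ _
      _ ≤ ENNReal.ofReal C0 ^ (k + 1) * ENNReal.ofReal (ρ ^ a) := by gcongr
      _ = ENNReal.ofReal (C0 ^ (k + 1) * ρ ^ a) := by
          rw [← ENNReal.ofReal_pow hC0.le, ← ENNReal.ofReal_mul (by positivity)]
  have hkm : (2 : ℝ) ^ k ≤ 2 * (1 + r * m) := by
    have : r / ρ ≤ 2 * (r * m) := by
      rw [div_le_iff₀ hρ]
      nlinarith
    linarith
  calc ENNReal.ofReal ((1 + r * m) ^ (-N)) * ∫⁻ y in ball x r, f y ∂μ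
      ≤ ENNReal.ofReal ((1 + r * m) ^ (-N)) * ENNReal.ofReal (C0 ^ (k + 1) * ρ ^ a) := by
        gcongr
    _ = ENNReal.ofReal ((1 + r * m) ^ (-N) * C0 ^ (k + 1) * ρ ^ a) := by
        rw [← ENNReal.ofReal_mul' (by positivity), mul_assoc]
    _ ≤ ENNReal.ofReal (C0 * 2 ^ N * r ^ a) :=
        ENNReal.ofReal_le_ofReal (mul_le_mul (rpow_neg_mul_pow_succ_le hC0 hN hC0N hkm)
          (Real.rpow_le_rpow hρ.le hρr.le ha) (by positivity) (by positivity))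

end Doubling

theorem exists_radius_of_auxm_pos {n : ℕ} {V : EuclideanSpace ℝ (Fin n) → ℝ}
    {x : EuclideanSpace ℝ (Fin n)} (h : 0 < auxm n V x) :
    ∃ ρ > 0, ∫⁻ y in ball x ρ, ENNReal.ofReal (V y) ≤ ENNReal.ofReal (ρ ^ ((n : ℝ) - 2)) ∧
      1 < 2 * ρ * auxm n V x := by
  set S : Set ℝ := {t | 0 < t ∧
    ∫⁻ y in ball x t, ENNReal.ofReal (V y) ≤ ENNReal.ofReal (t ^ ((n : ℝ) - 2))}
  have hS : auxm n V x = (sSup S)⁻¹ := rfl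
  rw [hS] at h ⊢
  have hpos : 0 < sSup S := inv_pos.1 h
  have hne : S.Nonempty := Set.nonempty_iff_ne_empty.2 fun he => by simp [he] at hpos
  obtain ⟨ρ, ⟨hρ, hρint⟩, hlt⟩ := exists_lt_of_lt_csSup hne (half_lt_self hpos)
  refine ⟨ρ, hρ, hρint, ?_⟩
  rw [← div_eq_mul_inv, one_lt_div hpos]
  linarith

theorem setLIntegral_ball_le_rpow_of_reverseHolder {n : ℕ} (hn : 2 ≤ n)
    {V : EuclideanSpace ℝ (Fin n) → ℝ} {s C r ρ : ℝ} {x : EuclideanSpace ℝ (Fin n)}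
    (hs : (n : ℝ) / 2 < s) (hr : 0 < r) (hrρ : r ≤ ρ)
    (hRH : ((volume (ball x ρ))⁻¹ * ∫⁻ y in ball x ρ, ENNReal.ofReal (V y) ^ s) ^ (1 / s) ≤
      ENNReal.ofReal C * ((volume (ball x ρ))⁻¹ * ∫⁻ y in ball x ρ, ENNReal.ofReal (V y)))
    (hρint : ∫⁻ y in ball x ρ, ENNReal.ofReal (V y) ≤ ENNReal.ofReal (ρ ^ ((n : ℝ) - 2))) :
    ∫⁻ y in ball x r, ENNReal.ofReal (V y) ≤ ENNReal.ofReal (C * r ^ ((n : ℝ) - 2)) := by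
  have hn' : (2 : ℝ) ≤ n := by exact_mod_cast hn
  have hs1 : 1 < s := by linarith
  have hρ : 0 < ρ := hr.trans_le hrρ
  have hexp : (n : ℝ) - 2 ≤ n * (1 - 1 / s) := by
    rw [mul_sub, mul_one, mul_one_div, sub_le_sub_iff_left (n : ℝ), div_le_iff₀ (by linarith)]
    linarith
  have hratio : ENNReal.ofReal ((r / ρ) ^ n) ^ (1 - 1 / s) ≤
      ENNReal.ofReal ((r / ρ) ^ ((n : ℝ) - 2)) := by
    rw [ENNReal.ofReal_rpow_of_nonneg (by positivity)
      (sub_nonneg.2 ((div_le_one (by linarith)).2 hs1.le)), ← Real.rpow_natCast,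
      ← Real.rpow_mul (by positivity)]
    exact ENNReal.ofReal_le_ofReal
      (Real.rpow_le_rpow_of_exponent_ge (by positivity) ((div_le_one hρ).2 hrρ) hexp)
  calc ∫⁻ y in ball x r, ENNReal.ofReal (V y)
      ≤ ENNReal.ofReal C * ENNReal.ofReal ((r / ρ) ^ n) ^ (1 - 1 / s) *
          ∫⁻ y in ball x ρ, ENNReal.ofReal (V y) := by
        simpa only [finrank_euclideanSpace_fin] using
          setLIntegral_ball_le_of_reverseHolder volume hs1 hr hrρ hRH
    _ ≤ ENNReal.ofReal C * ENNReal.ofReal ((r / ρ) ^ ((n : ℝ) - 2)) *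
          ENNReal.ofReal (ρ ^ ((n : ℝ) - 2)) := by gcongr
    _ = ENNReal.ofReal (C * r ^ ((n : ℝ) - 2)) := by
        rw [mul_assoc, ← ENNReal.ofReal_mul (by positivity),
          ← Real.mul_rpow (by positivity) hρ.le, div_mul_cancel₀ r hρ.ne',
          ← ENNReal.ofReal_mul' (by positivity)]

theorem auxm_ball_measure_bound_general (n : ℕ) (hn : 3 ≤ n)
    (V : EuclideanSpace ℝ (Fin n) → ℝ)
    (s : ℝ) (hs : (n : ℝ) / 2 < s)
    (hRH : ReverseHolder n V s)
    (hm : ∀ x, 0 < auxm n V x)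
    (C0 : ℝ)
    (hdouble : ∀ (x : EuclideanSpace ℝ (Fin n)) (r : ℝ), 0 < r →
      ∫⁻ y in Metric.ball x (2 * r), ENNReal.ofReal (V y) ≤
        ENNReal.ofReal C0 * ∫⁻ y in Metric.ball x r, ENNReal.ofReal (V y)) :
    ∀ N : ℝ, N > Real.logb 2 C0 + 1 →
      ∃ CN > (0 : ℝ), ∀ (x : EuclideanSpace ℝ (Fin n)) (r : ℝ), 0 < r →
        ENNReal.ofReal ((1 + r * auxm n V x) ^ (-N)) *
            ∫⁻ y in Metric.ball x r, ENNReal.ofReal (V y) ≤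
          ENNReal.ofReal (CN * r ^ ((n : ℝ) - 2)) := by
  intro N hN
  obtain ⟨C, -, hRH⟩ := hRH
  rcases lt_or_ge C0 1 with hC01 | hC01
  · refine ⟨1, one_pos, fun x r _ => ?_⟩
    obtain ⟨ρ, hρ, hρint, -⟩ := exists_radius_of_auxm_pos (hm x)
    rw [setLIntegral_ball_eq_zero_of_doubling_lt_one (hdouble x) hC01 hρ
      (ne_top_of_le_ne_top ENNReal.ofReal_ne_top hρint) r, mul_zero]
    exact zero_le
  have hN0 : 0 ≤ N := by linarith [Real.logb_nonneg one_lt_two hC01]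
  have hC0N : C0 ≤ 2 ^ N := ((Real.logb_lt_iff_lt_rpow one_lt_two (by linarith)).1 (by linarith)).le
  refine ⟨max C (C0 * 2 ^ N), lt_max_of_lt_right (by positivity), fun x r hr => ?_⟩
  obtain ⟨ρ, hρ, hρint, hρm⟩ := exists_radius_of_auxm_pos (hm x)
  rcases le_or_gt r ρ with hrρ | hρr
  · calc ENNReal.ofReal ((1 + r * auxm n V x) ^ (-N)) *
          ∫⁻ y in Metric.ball x r, ENNReal.ofReal (V y)
        ≤ 1 * ENNReal.ofReal (C * r ^ ((n : ℝ) - 2)) := by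
          refine mul_le_mul' (ENNReal.ofReal_le_one.2 (Real.rpow_le_one_of_one_le_of_nonpos ?_
            (by linarith))) (setLIntegral_ball_le_rpow_of_reverseHolder (by omega) hs hr hrρ
              (hRH x ρ hρ) hρint)
          nlinarith [hm x]
      _ ≤ ENNReal.ofReal (max C (C0 * 2 ^ N) * r ^ ((n : ℝ) - 2)) := by
          rw [one_mul]
          gcongr
          exact le_max_left _ _
  · refine (rpow_neg_mul_setLIntegral_ball_le_of_doubling (hdouble x) (by linarith) hN0 hC0N
      (by rw [sub_nonneg]; exact_mod_cast (by omega : 2 ≤ n)) hρ hρint hρr hρm).trans ?_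
    gcongr
    exact le_max_right _ _

/-- Guo–Li–Peng's Lemma 2.3: decay estimate for the `V`-measure of balls
in terms of the auxiliary function `m_V`. -/
theorem auxm_ball_measure_bound (n : ℕ) (hn : 3 ≤ n)
    (V : EuclideanSpace ℝ (Fin n) → ℝ) (hV : ∀ x, 0 ≤ V x)
    (s : ℝ) (hs : (n : ℝ) / 2 < s)
    (hRH : ReverseHolder n V s)
    (hm : ∀ x, 0 < auxm n V x)
    (C0 : ℝ) (hC0 : 0 < C0)
    (hdouble : ∀ (x : EuclideanSpace ℝ (Fin n)) (r : ℝ), 0 < r →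
      ∫⁻ y in Metric.ball x (2 * r), ENNReal.ofReal (V y) ≤
        ENNReal.ofReal C0 * ∫⁻ y in Metric.ball x r, ENNReal.ofReal (V y)) :
    ∀ N : ℝ, N > Real.logb 2 C0 + 1 →
      ∃ CN > (0 : ℝ), ∀ (x : EuclideanSpace ℝ (Fin n)) (r : ℝ), 0 < r →
        ENNReal.ofReal ((1 + r * auxm n V x) ^ (-N)) *
            ∫⁻ y in Metric.ball x r, ENNReal.ofReal (V y) ≤
          ENNReal.ofReal (CN * r ^ ((n : ℝ) - 2)) :=
  auxm_ball_measure_bound_general n hn V s hs hRH hm C0 hdouble
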